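/- There exists a reduced, commutative, cancellative, atomic monoid H that is tame (t(H) < ∞) but satisfies c_eq(H) = ∞ (and hence c_mon(H) = ∞), while c_adj(H) < ∞ (indeed c_adj(H) ≤ 6). -/

import Mathlib

namespace CMR

variable {α : Type*} [CancelCommMonoid α]

/-- The factorization monoid `Z(H)`: the free abelian monoid over the set of atoms of `H`,
modeled as multisets of atoms. -/
abbrev Fac (α : Type*) [CancelCommMonoid α] : Type _ := Multiset {u : α // Irreducible u}

/-- The factorization homomorphism `π : Z(H) → H`. -/
def piF (z : Fac α) : α := (z.map Subtype.val).prod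

/-- `Z a`: the set of factorizations of `a`. -/
def Z (a : α) : Set (Fac α) := {z | piF z = a}

/-- `L a`: the set of lengths of `a`. -/
def L (a : α) : Set ℕ := {n | ∃ z ∈ Z a, Multiset.card z = n}

/-- `Zk a k`: the factorizations of `a` of length `k`. -/
def Zk (a : α) (k : ℕ) : Set (Fac α) := {z ∈ Z a | Multiset.card z = k}

/-- `ZM a M`: the factorizations of `a` whose length lies in `M`. -/
def ZM (a : α) (M : Set ℕ) : Set (Fac α) := {z ∈ Z a | Multiset.card z ∈ M}

/-- The distance between two factorizations:
`d(z,z') = max (|z / gcd(z,z')|, |z' / gcd(z,z')|)`. -/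
noncomputable def d (z z' : Fac α) : ℕ :=
  letI := Classical.decEq {u : α // Irreducible u}
  max (Multiset.card (z - z')) (Multiset.card (z' - z))

/-- The distance between two sets of factorizations, the minimum of pairwise
distances (with the convention `sInf ∅ = 0`). -/
noncomputable def dS (X Y : Set (Fac α)) : ℕ :=
  sInf {n : ℕ | ∃ x ∈ X, ∃ y ∈ Y, d x y = n}

/-- `k` and `l` are adjacent lengths of `a` (with `k < l`):
`L(a) ∩ [k, l] = {k, l}`. -/
def Adjacent (a : α) (k l : ℕ) : Prop :=
  k ∈ L a ∧ l ∈ L a ∧ k < l ∧ ∀ m ∈ L a, k ≤ m → m ≤ l → m = k ∨ m = l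

/-- A chain of factorizations of `a` from `z` to `z'` whose consecutive members
satisfy the step predicate `P`. -/
def Chain (a : α) (P : Fac α → Fac α → Prop) (z z' : Fac α) : Prop :=
  ∃ (n : ℕ) (c : Fin (n + 1) → Fac α),
    c 0 = z ∧ c (Fin.last n) = z' ∧ (∀ i, c i ∈ Z a) ∧
    ∀ i : Fin n, P (c i.castSucc) (c i.succ)

/-- The catenary degree of an element: the smallest `N ∈ ℕ∞` such that any two
factorizations of `a` are connected by an `N`-chain. -/
noncomputable def cat (a : α) : ℕ∞ :=
  sInf {N : ℕ∞ | ∀ z ∈ Z a, ∀ z' ∈ Z a,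
    Chain a (fun x y => (d x y : ℕ∞) ≤ N) z z'}

/-- The equal catenary degree of an element: the smallest `N ∈ ℕ∞` such that any two
factorizations of `a` of the same length are connected by an equal-length `N`-chain. -/
noncomputable def ceq (a : α) : ℕ∞ :=
  sInf {N : ℕ∞ | ∀ z ∈ Z a, ∀ z' ∈ Z a, Multiset.card z = Multiset.card z' →
    Chain a (fun x y => (d x y : ℕ∞) ≤ N ∧ Multiset.card x = Multiset.card y) z z'}

/-- The monotone catenary degree of an element: the smallest `N ∈ ℕ∞` such that any two
factorizations of `a` (ordered by length) are connected by a monotone `N`-chain. -/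
noncomputable def cmon (a : α) : ℕ∞ :=
  sInf {N : ℕ∞ | ∀ z ∈ Z a, ∀ z' ∈ Z a, Multiset.card z ≤ Multiset.card z' →
    Chain a (fun x y => (d x y : ℕ∞) ≤ N ∧ Multiset.card x ≤ Multiset.card y) z z'}

/-- The adjacent catenary degree of an element:
`c_adj(a) = sup{d(Z_k(a), Z_l(a)) : k, l ∈ L(a) adjacent}`. -/
noncomputable def cadj (a : α) : ℕ∞ :=
  sSup {r : ℕ∞ | ∃ k l : ℕ, Adjacent a k l ∧ r = (dS (Zk a k) (Zk a l) : ℕ∞)}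

noncomputable def catH (α : Type*) [CancelCommMonoid α] : ℕ∞ := ⨆ a : α, cat a
noncomputable def ceqH (α : Type*) [CancelCommMonoid α] : ℕ∞ := ⨆ a : α, ceq a
noncomputable def cmonH (α : Type*) [CancelCommMonoid α] : ℕ∞ := ⨆ a : α, cmon a
noncomputable def cadjH (α : Type*) [CancelCommMonoid α] : ℕ∞ := ⨆ a : α, cadj a

/-- `gcd(x, y) ≠ 1`: the two factorizations share an atom. -/
def RStep (x y : Fac α) : Prop := ∃ u, u ∈ x ∧ u ∈ y

/-- `z ≈ z'`: there is an `R`-chain concatenating `z` and `z'` in `Z a`. -/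
def RRel (a : α) (z z' : Fac α) : Prop := Chain a RStep z z'

/-- `z ≈_eq z'`: there is an equal-length `R`-chain concatenating `z` and `z'` in `Z a`. -/
def RRelEq (a : α) (z z' : Fac α) : Prop :=
  Chain a (fun x y => RStep x y ∧ Multiset.card x = Multiset.card y) z z'

/-- There is a monotone `R`-chain from `z` to `z'` in `Z a`. -/
def MonRChain (a : α) (z z' : Fac α) : Prop :=
  Chain a (fun x y => RStep x y ∧ Multiset.card x ≤ Multiset.card y) z z'

/-- `μ(a)`: the supremum, over the `R`-classes `ρ` of `Z a`, of the minimal length of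
an element of `ρ`. -/
noncomputable def mu (a : α) : ℕ∞ :=
  sSup {r : ℕ∞ | ∃ z ∈ Z a,
    r = ((sInf {n : ℕ | ∃ z', RRel a z z' ∧ Multiset.card z' = n} : ℕ) : ℕ∞)}

noncomputable def muH (α : Type*) [CancelCommMonoid α] : ℕ∞ := ⨆ a : α, mu a

/-- `μ_eq(a) = sup{k ∈ L(a) : Z_k(a) has more than one ≈_eq-class}`. -/
noncomputable def mueq (a : α) : ℕ∞ :=
  sSup {r : ℕ∞ | ∃ k ∈ L a,
    (∃ z ∈ Zk a k, ∃ z' ∈ Zk a k, ¬ RRelEq a z z') ∧ r = (k : ℕ∞)}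

noncomputable def mueqH (α : Type*) [CancelCommMonoid α] : ℕ∞ := ⨆ a : α, mueq a

/-- `μ_adj(a) = sup{k ∈ L(a) : d(Z_k(a), Z_l(a)) = k for the l ∈ L(a), l < k adjacent to k}`. -/
noncomputable def muadj (a : α) : ℕ∞ :=
  sSup {r : ℕ∞ | ∃ k ∈ L a,
    (∃ l : ℕ, Adjacent a l k ∧ dS (Zk a k) (Zk a l) = k) ∧ r = (k : ℕ∞)}

noncomputable def muadjH (α : Type*) [CancelCommMonoid α] : ℕ∞ := ⨆ a : α, muadj a

/-- The monoid of relations of `H`, as a subset of `Z(H) × Z(H)`. -/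
def relMon (α : Type*) [CancelCommMonoid α] : Set (Fac α × Fac α) :=
  {p | piF p.1 = piF p.2}

/-- The monoid of equal-length relations of `H`. -/
def relMonEq (α : Type*) [CancelCommMonoid α] : Set (Fac α × Fac α) :=
  {p | piF p.1 = piF p.2 ∧ Multiset.card p.1 = Multiset.card p.2}

/-- The monoid of monotone relations of `H`. -/
def relMonMon (α : Type*) [CancelCommMonoid α] : Set (Fac α × Fac α) :=
  {p | piF p.1 = piF p.2 ∧ Multiset.card p.1 ≤ Multiset.card p.2}

/-- `p` is an atom (irreducible element) of the reduced submonoid `S` of `Z(H) × Z(H)`. -/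
def IsAtomIn (S : Set (Fac α × Fac α)) (p : Fac α × Fac α) : Prop :=
  p ∈ S ∧ p ≠ 0 ∧ ∀ q ∈ S, ∀ r ∈ S, p = q + r → q = 0 ∨ r = 0

/-- `A_a(S) = A(S) ∩ (Z(a) × Z(a))`. -/
def AtomsAt (S : Set (Fac α × Fac α)) (a : α) : Set (Fac α × Fac α) :=
  {p | IsAtomIn S p ∧ p.1 ∈ Z a ∧ p.2 ∈ Z a}

/-- The tame degree `t(a, x)`. -/
noncomputable def tdeg (a : α) (x : Fac α) : ℕ∞ :=
  sInf {N : ℕ∞ | ∀ z ∈ Z a, (∃ w ∈ Z a, x ≤ w) →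
    ∃ z' ∈ Z a, x ≤ z' ∧ (d z z' : ℕ∞) ≤ N}

/-- The tame degree `t(H) = sup{t(a, u) : a ∈ H, u ∈ A(H)}`. -/
noncomputable def tH (α : Type*) [CancelCommMonoid α] : ℕ∞ :=
  ⨆ (a : α) (u : {u : α // Irreducible u}), tdeg a {u}

/-- The `m`-adjacent catenary degree of an element:
`c_{ad,m}(a) = sup{d(Z_k(a), Z_{[k-m,k)}(a)) : k ∈ L(a)}`. -/
noncomputable def cadm (m : ℕ) (a : α) : ℕ∞ :=
  sSup {r : ℕ∞ | ∃ k ∈ L a, r = (dS (Zk a k) (ZM a (Set.Ico (k - m) k)) : ℕ∞)}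

noncomputable def cadmH (α : Type*) [CancelCommMonoid α] (m : ℕ) : ℕ∞ := ⨆ a : α, cadm m a

/-- `μ_{ad,m}(a) = sup{k ∈ L(a) : d(Z_k(a), Z_{[k-m,k)}(a)) = k}`. -/
noncomputable def muadm (m : ℕ) (a : α) : ℕ∞ :=
  sSup {r : ℕ∞ | ∃ k ∈ L a, dS (Zk a k) (ZM a (Set.Ico (k - m) k)) = k ∧ r = (k : ℕ∞)}

noncomputable def muadmH (α : Type*) [CancelCommMonoid α] (m : ℕ) : ℕ∞ := ⨆ a : α, muadm m a

/-- `H` is reduced: the only unit is `1`. -/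
def Reduced (α : Type*) [CancelCommMonoid α] : Prop := ∀ a : α, IsUnit a → a = 1

/-- `H` is atomic: every element is a product of atoms. -/
def Atomic (α : Type*) [CancelCommMonoid α] : Prop := ∀ a : α, ∃ z : Fac α, piF z = a

/-- The ascending chain condition on principal ideals. -/
def ACCP (α : Type*) [CancelCommMonoid α] : Prop :=
  ∀ f : ℕ → α, (∀ n, f (n + 1) ∣ f n) → ∃ N, ∀ n, N ≤ n → f N ∣ f n


/-!
The monoid is the submonoid `H` of `ℤ × ℤ` generated by the `(±3 ^ (k + 1) ^ 2, 1)` and by the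
`(x, 2)` for which `x` is not a sum of two of the numbers `±3 ^ (k + 1) ^ 2`. These generators are
the atoms, and the second coordinate is a degree: `deg a = |z| + #{degree-two atoms of z}` for every
factorization `z` of `a`.

Every `(x, n)` with `n ≥ 2` lies in `H`. Hence a part of a factorization of degree `deg u + 2` or
`deg u + 3` can be rewritten as `u` times at most three atoms, so `t(H) ≤ 4`; and a factorization
of length `l ≥ 5` having a shorter one can be shortened by one by exchanging at most four atoms
(two degree-one atoms and a degree-two atom for two degree-two atoms prime to `3`, or four
degree-one atoms for a degree-two atom and two degree-one atoms of huge scale), so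
`c_adj(H) ≤ 4`.

A factorization of `a` of the maximal length `deg a` uses only degree-one atoms. As the scales
`3 ^ (k + 1) ^ 2` grow super-exponentially, the sum of the first coordinates of its atoms below
scale `k + 1` is determined modulo `3 ^ (k + 2) ^ 2` by `a`, but changes by at most
`3 ^ (k + 1) ^ 2` per exchanged atom. For `a = (3 ^ (k + 2) ^ 2, 3 ^ (2k + 3))` this sum takes two
different values on maximal-length factorizations, so some step of every equal-length chain
between them exchanges about `3 ^ (2k + 3) / 2` atoms: `c_eq(H) = ∞`. Finally a monotone chain
between factorizations of equal length is an equal-length chain, so `c_mon(H) ≥ c_eq(H)`.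
-/

theorem _root_.Multiset.exists_le_card_eq {β : Type*} {s : Multiset β} {n : ℕ}
    (h : n ≤ Multiset.card s) : ∃ t ≤ s, Multiset.card t = n := by
  induction s using Quotient.inductionOn with
  | h l => exact ⟨l.take n, Multiset.coe_le.2 (List.take_sublist n l).subperm, by simpa using h⟩

theorem _root_.Multiset.sum_map_sub_sum_map {β γ : Type*} [DecidableEq β] [AddCommGroup γ]
    (s t : Multiset β) (f : β → γ) :
    (s.map f).sum - (t.map f).sum = ((s - t).map f).sum - ((t - s).map f).sum := by
  have hs : (s.map f).sum = ((s - t).map f).sum + ((s ∩ t).map f).sum := by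
    rw [← Multiset.sum_add, ← Multiset.map_add, Multiset.sub_add_inter]
  have ht : (t.map f).sum = ((t - s).map f).sum + ((s ∩ t).map f).sum := by
    rw [← Multiset.sum_add, ← Multiset.map_add, Multiset.inter_comm, Multiset.sub_add_inter]
  rw [hs, ht]
  abel

theorem _root_.Multiset.abs_sum_map_le_card_mul {β : Type*} {s : Multiset β} {f : β → ℤ} {c : ℤ}
    (h : ∀ x ∈ s, |f x| ≤ c) : |(s.map f).sum| ≤ Multiset.card s * c :=
  calc |(s.map f).sum| ≤ ((s.map f).map abs).sum := Multiset.abs_sum_le_sum_abs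
    _ ≤ Multiset.card ((s.map f).map abs) • c :=
        Multiset.sum_le_card_nsmul _ _ (by simpa using h)
    _ = Multiset.card s * c := by simp

/-- If all four-element submultisets had sum zero, every element would equal the total sum `σ`,
forcing `σ = 5σ`. -/
theorem _root_.Multiset.exists_card_eq_four_sum_map_ne_zero {β : Type*} {s : Multiset β}
    {f : β → ℤ} (hs : 5 ≤ Multiset.card s) (hf : ∀ x ∈ s, f x ≠ 0) :
    ∃ t ≤ s, Multiset.card t = 4 ∧ (t.map f).sum ≠ 0 := by
  classical
  obtain ⟨u, hus, hu⟩ := Multiset.exists_le_card_eq hs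
  by_contra! h
  have hconst : ∀ x ∈ u, f x = (u.map f).sum := fun x hx => by
    have := h (u.erase x) ((Multiset.erase_le x u).trans hus)
      (by rw [Multiset.card_erase_of_mem hx, hu]; rfl)
    rw [← Multiset.sum_map_erase hx, this, add_zero]
  obtain ⟨x, hx⟩ := Multiset.card_pos_iff_exists_mem.1 (show 0 < Multiset.card u by omega)
  have h5 : (u.map f).sum = 5 * (u.map f).sum := by
    conv_lhs => rw [Multiset.map_congr rfl hconst, Multiset.map_const', Multiset.sum_replicate, hu]
    simp
  exact hf x (Multiset.mem_of_le hus hx) (by rw [hconst x hx]; omega)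

lemma d_eq [DecidableEq {u : α // Irreducible u}] (z z' : Fac α) :
    d z z' = max (Multiset.card (z - z')) (Multiset.card (z' - z)) := by
  unfold d
  congr <;> exact Subsingleton.elim _ _

lemma d_comm (z z' : Fac α) : d z z' = d z' z := by
  classical
  rw [d_eq, d_eq, max_comm]

lemma d_le_max_card (z z' : Fac α) : d z z' ≤ max (Multiset.card z) (Multiset.card z') := by
  classical
  rw [d_eq]
  exact max_le_max (Multiset.card_le_card tsub_le_self) (Multiset.card_le_card tsub_le_self)

lemma d_add_right (z z' y : Fac α) : d (z + y) (z' + y) = d z z' := by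
  classical
  rw [d_eq, d_eq, add_tsub_add_eq_tsub_right, add_tsub_add_eq_tsub_right]

lemma dS_le_d {X Y : Set (Fac α)} {x y : Fac α} (hx : x ∈ X) (hy : y ∈ Y) : dS X Y ≤ d x y :=
  Nat.sInf_le ⟨x, hx, y, hy, rfl⟩

lemma Chain.exists_step_of_not {a : α} {P : Fac α → Fac α → Prop} {z z' : Fac α}
    {Q : Fac α → Prop} (h : Chain a P z z') (hz : Q z) (hz' : ¬ Q z') :
    ∃ x ∈ Z a, ∃ y ∈ Z a, P x y ∧ Q x ∧ ¬ Q y := by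
  obtain ⟨n, c, rfl, rfl, hc, hP⟩ := h
  by_contra! hstep
  have hall : ∀ i, Q (c i) := fun i => by
    induction i using Fin.induction with
    | zero => exact hz
    | succ i ih => exact hstep _ (hc _) _ (hc _) (hP i) ih
  exact hz' (hall _)

lemma ceq_le_cmon (a : α) : ceq a ≤ cmon a := by
  refine sInf_le_sInf fun N hN z hz z' hz' hzz' => ?_
  obtain ⟨n, c, h0, hl, hc, hstep⟩ := hN z hz z' hz' hzz'.le
  have hmono : Monotone fun i => Multiset.card (c i) :=
    Fin.monotone_iff_le_succ.2 fun i => (hstep i).2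
  refine ⟨n, c, h0, hl, hc, fun i => ⟨(hstep i).1, le_antisymm (hstep i).2 ?_⟩⟩
  calc Multiset.card (c i.succ) ≤ Multiset.card (c (Fin.last n)) := hmono (Fin.le_last _)
    _ = Multiset.card (c 0) := by rw [hl, h0, hzz']
    _ ≤ Multiset.card (c i.castSucc) := hmono (Fin.zero_le _)

lemma ceqH_le_cmonH : ceqH α ≤ cmonH α := iSup_mono ceq_le_cmon

namespace Counterexample

open Multiset Pointwise

def scale (k : ℕ) : ℤ := 3 ^ ((k + 1) ^ 2)

lemma scale_pos (k : ℕ) : 0 < scale k := by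
  unfold scale
  positivity

lemma scale_succ (k : ℕ) : scale (k + 1) = 3 ^ (2 * k + 3) * scale k := by
  unfold scale
  rw [← pow_add]
  ring_nf

lemma mul_scale_le_scale {j k : ℕ} (h : j < k) : 27 * scale j ≤ scale k := by
  unfold scale
  calc 27 * (3 : ℤ) ^ ((j + 1) ^ 2) = 3 ^ ((j + 1) ^ 2 + 3) := by ring
    _ ≤ 3 ^ ((k + 1) ^ 2) := pow_le_pow_right₀ (by norm_num) (by nlinarith)

lemma scale_strictMono : StrictMono scale := fun j k h => by
  have := mul_scale_le_scale h
  have := scale_pos j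
  linarith

lemma scale_dvd_scale {j k : ℕ} (h : j ≤ k) : scale j ∣ scale k :=
  pow_dvd_pow 3 (Nat.pow_le_pow_left (by omega) 2)

lemma exists_lt_scale (x : ℤ) : ∃ N, x < scale N := by
  refine ⟨x.toNat, lt_of_le_of_lt (Int.self_le_toNat x) ?_⟩
  unfold scale
  exact_mod_cast (Nat.lt_pow_self (by norm_num)).trans_le'
    (by nlinarith : x.toNat ≤ (x.toNat + 1) ^ 2)

def base : Set ℤ := {v | ∃ k, |v| = scale k}

lemma scale_mem_base (k : ℕ) : scale k ∈ base := ⟨k, abs_of_pos (scale_pos k)⟩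

lemma neg_scale_mem_base (k : ℕ) : -scale k ∈ base :=
  ⟨k, by rw [abs_neg, abs_of_pos (scale_pos k)]⟩

lemma three_mem_base : (3 : ℤ) ∈ base := ⟨0, by norm_num [scale]⟩

lemma ne_zero_of_mem_base {v : ℤ} (hv : v ∈ base) : v ≠ 0 := by
  obtain ⟨k, hk⟩ := hv
  exact abs_pos.1 (hk ▸ scale_pos k)

lemma three_dvd_of_mem_base {v : ℤ} (hv : v ∈ base) : 3 ∣ v := by
  obtain ⟨k, hk⟩ := hv
  exact (dvd_abs _ _).1 (hk ▸ dvd_pow_self 3 (by positivity))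

lemma notMem_add_of_not_three_dvd {v : ℤ} (hv : ¬ 3 ∣ v) : v ∉ base + base := by
  rintro ⟨p, hp, q, hq, rfl⟩
  exact hv (dvd_add (three_dvd_of_mem_base hp) (three_dvd_of_mem_base hq))

/-- The value is close to `scale (N + 1)`, so a decomposition `p + q` must have `p = scale (N + 1)`;
then `q = x - scale N` is close to `-scale N`, forcing `x = 0`. -/
lemma scale_succ_sub_scale_add_notMem {x : ℤ} {N : ℕ} (hx0 : x ≠ 0) (hx : 2 * |x| < scale N) :
    scale (N + 1) - scale N + x ∉ base + base := by
  intro h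
  obtain ⟨p, ⟨a, hp⟩, q, ⟨b, hq⟩, hpq⟩ := Set.mem_add.1 h
  clear h
  wlog hba : b ≤ a generalizing p q a b
  · exact this q b hq p (by rw [← hpq, add_comm]) a hp (by omega)
  have := scale_pos a
  have := scale_pos b
  have hN := scale_pos N
  have hNN := mul_scale_le_scale (show N < N + 1 by omega)
  have hx1 := le_abs_self x
  have hx2 := neg_abs_le x
  have hab := scale_strictMono.monotone hba
  have hp' := (abs_eq (scale_pos a).le).1 hp
  have hq' := (abs_eq (scale_pos b).le).1 hq
  rcases lt_trichotomy a (N + 1) with ha | rfl | ha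
  · have := scale_strictMono.monotone (Nat.lt_succ_iff.1 ha)
    rcases hp' with rfl | rfl <;> rcases hq' with rfl | rfl <;> linarith
  · rcases lt_trichotomy b N with hb | rfl | hb
    · have := mul_scale_le_scale hb
      rcases hp' with rfl | rfl <;> rcases hq' with rfl | rfl <;> linarith
    · rcases hp' with rfl | rfl <;> rcases hq' with rfl | rfl <;>
        first | linarith | exact hx0 (by linarith)
    · obtain rfl : b = N + 1 := by omega
      rcases hp' with rfl | rfl <;> rcases hq' with rfl | rfl <;> linarith
  · have := mul_scale_le_scale ha
    rcases hba.lt_or_eq with hb | rfl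
    · have := mul_scale_le_scale hb
      rcases hp' with rfl | rfl <;> rcases hq' with rfl | rfl <;> linarith
    · rcases hp' with rfl | rfl <;> rcases hq' with rfl | rfl <;> linarith

def small (k : ℕ) (x : ℤ) : ℤ := if |x| < scale (k + 1) then x else 0

lemma abs_small_le {k : ℕ} {x : ℤ} (hx : x ∈ base) : |small k x| ≤ scale k := by
  obtain ⟨j, hj⟩ := hx
  unfold small
  split_ifs with h
  · rw [hj] at h ⊢
    exact scale_strictMono.monotone (Nat.lt_succ_iff.1 (scale_strictMono.lt_iff_lt.1 h))
  · simp [(scale_pos k).le]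

lemma scale_succ_dvd_sub_small {k : ℕ} {x : ℤ} (hx : x ∈ base) :
    scale (k + 1) ∣ x - small k x := by
  obtain ⟨j, hj⟩ := hx
  unfold small
  split_ifs with h
  · simp
  · rw [sub_zero, ← dvd_abs, hj]
    exact scale_dvd_scale (scale_strictMono.le_iff_le.1 (hj ▸ not_lt.1 h))

def gens : Set (ℤ × ℤ) := {p | p.2 = 1 ∧ p.1 ∈ base ∨ p.2 = 2 ∧ p.1 ∉ base + base}

@[simp] lemma mk_one_mem_gens {x : ℤ} : (x, (1 : ℤ)) ∈ gens ↔ x ∈ base := by simp [gens]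

@[simp] lemma mk_two_mem_gens {x : ℤ} : (x, (2 : ℤ)) ∈ gens ↔ x ∉ base + base := by simp [gens]

lemma snd_eq_one_or_two {p : ℤ × ℤ} (hp : p ∈ gens) : p.2 = 1 ∨ p.2 = 2 :=
  hp.imp And.left And.left

lemma fst_mem_base {p : ℤ × ℤ} (hp : p ∈ gens) (h : p.2 = 1) : p.1 ∈ base := by
  rcases hp with ⟨-, hp⟩ | ⟨h2, -⟩
  · exact hp
  · omega

def OfGens (Y : Multiset (ℤ × ℤ)) : Prop := ∀ p ∈ Y, p ∈ gens

@[simp] lemma ofGens_cons {p : ℤ × ℤ} {Y : Multiset (ℤ × ℤ)} :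
    OfGens (p ::ₘ Y) ↔ p ∈ gens ∧ OfGens Y :=
  forall_mem_cons

@[simp] lemma ofGens_add {Y Y' : Multiset (ℤ × ℤ)} : OfGens (Y + Y') ↔ OfGens Y ∧ OfGens Y' := by
  simp only [OfGens, mem_add, or_imp, forall_and]

@[simp] lemma ofGens_singleton {p : ℤ × ℤ} : OfGens {p} ↔ p ∈ gens := by
  simp [OfGens]

@[simp] lemma ofGens_replicate {n : ℕ} {p : ℤ × ℤ} (hp : p ∈ gens) : OfGens (replicate n p) :=
  fun _ hq => eq_of_mem_replicate hq ▸ hp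

lemma OfGens.filter_add_filter {Y : Multiset (ℤ × ℤ)} (hY : OfGens Y) :
    Y.filter (·.2 = 1) + Y.filter (·.2 = 2) = Y := by
  conv_rhs => rw [← filter_add_not (·.2 = 1) Y]
  congr 1
  refine filter_congr fun p hp => ?_
  rcases snd_eq_one_or_two (hY p hp) with h | h <;> simp [h]

lemma OfGens.snd_sum {Y : Multiset (ℤ × ℤ)} (hY : OfGens Y) :
    Y.sum.2 = card Y + card (Y.filter (·.2 = 2)) := by
  induction Y using Multiset.induction with
  | empty => simp
  | cons p Y ih =>
    rw [ofGens_cons] at hY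
    rcases snd_eq_one_or_two hY.1 with h | h
    · rw [filter_cons_of_neg Y (by omega)]
      push_cast [sum_cons, Prod.snd_add, card_cons, h, ih hY.2]
      ring
    · rw [filter_cons_of_pos Y h]
      push_cast [sum_cons, Prod.snd_add, card_cons, h, ih hY.2]
      ring

lemma OfGens.card_le_snd_sum {Y : Multiset (ℤ × ℤ)} (hY : OfGens Y) : (card Y : ℤ) ≤ Y.sum.2 := by
  rw [hY.snd_sum]
  omega

/-- `(x, 2)` is an atom or a sum of two degree-one atoms, and adding `(3, 1)` raises the degree. -/
lemma exists_ofGens_sum_eq (x : ℤ) (n : ℕ) : ∃ B, OfGens B ∧ B.sum = (x, (n : ℤ) + 2) := by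
  induction n generalizing x with
  | zero =>
    by_cases hx : x ∈ base + base
    · obtain ⟨p, hp, q, hq, rfl⟩ := Set.mem_add.1 hx
      exact ⟨{(p, 1), (q, 1)}, by simp [hp, hq], by simp⟩
    · exact ⟨{(x, 2)}, by simpa using hx, by simp⟩
  | succ n ih =>
    obtain ⟨B, hB, hsum⟩ := ih (x - 3)
    refine ⟨(3, 1) ::ₘ B, by simpa [hB] using three_mem_base, ?_⟩
    rw [sum_cons, hsum, Prod.mk_add_mk]
    congr 1 <;> push_cast <;> ring

/-- Adding generators one at a time, the degree first reaches `n` with overshoot at most one. -/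
lemma OfGens.exists_le_snd_sum_mem_Icc {Y : Multiset (ℤ × ℤ)} (hY : OfGens Y) {n : ℤ}
    (hn0 : 0 ≤ n) (hn : n ≤ Y.sum.2) :
    ∃ R ≤ Y, n ≤ R.sum.2 ∧ R.sum.2 ≤ n + 1 ∧ (card R : ℤ) ≤ n := by
  induction Y using Multiset.induction generalizing n with
  | empty =>
    obtain rfl : n = 0 := le_antisymm (by simpa using hn) hn0
    exact ⟨0, le_rfl, by simp, by simp, by simp⟩
  | cons p Y ih =>
    rw [ofGens_cons] at hY
    have hp := snd_eq_one_or_two hY.1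
    by_cases hnp : n ≤ p.2
    · rcases hn0.eq_or_lt with rfl | hpos
      · exact ⟨0, zero_le _, by simp, by simp, by simp⟩
      · refine ⟨{p}, singleton_le.2 (mem_cons_self p Y), ?_⟩
        rw [sum_singleton, card_singleton]
        omega
    · obtain ⟨R, hRY, hR⟩ := ih hY.2 (n := n - p.2) (by omega)
        (by rw [sum_cons, Prod.snd_add] at hn; omega)
      refine ⟨p ::ₘ R, cons_le_cons p hRY, ?_⟩
      rw [sum_cons, Prod.snd_add, card_cons]
      push_cast
      omega

def H : AddSubmonoid (ℤ × ℤ) := AddSubmonoid.closure gens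

lemma mem_H_iff {p : ℤ × ℤ} : p ∈ H ↔ ∃ Y, OfGens Y ∧ Y.sum = p :=
  ⟨AddSubmonoid.exists_multiset_of_mem_closure,
    fun ⟨Y, hY, h⟩ => h ▸ AddSubmonoid.multiset_sum_mem _ Y fun q hq =>
      AddSubmonoid.subset_closure (hY q hq)⟩

instance : AddCancelCommMonoid H :=
  Function.Injective.addCancelCommMonoid Subtype.val Subtype.val_injective rfl (fun _ _ => rfl)
    (fun _ _ => rfl)

abbrev G : Type := Multiplicative H

def val (a : G) : ℤ × ℤ := (Multiplicative.toAdd a : H)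

def ofVal (p : ℤ × ℤ) (hp : p ∈ H) : G := Multiplicative.ofAdd ⟨p, hp⟩

@[simp] lemma val_ofVal {p : ℤ × ℤ} (hp : p ∈ H) : val (ofVal p hp) = p := rfl

@[simp] lemma val_mul (a b : G) : val (a * b) = val a + val b := rfl

@[simp] lemma val_one : val 1 = 0 := rfl

lemma val_injective : Function.Injective val :=
  fun _ _ h => Multiplicative.toAdd.injective (Subtype.ext h)

lemma val_mem (a : G) : val a ∈ H := (Multiplicative.toAdd a).2

lemma val_prod (s : Multiset G) : val s.prod = (s.map val).sum := by
  induction s using Multiset.induction with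
  | empty => simp
  | cons a s ih => simp [ih]

lemma eq_zero_or_one_le_snd {p : ℤ × ℤ} (hp : p ∈ H) : p = 0 ∨ 1 ≤ p.2 := by
  obtain ⟨Y, hY, rfl⟩ := mem_H_iff.1 hp
  rcases Y.empty_or_exists_mem with rfl | ⟨q, hq⟩
  · simp
  · have := hY.card_le_snd_sum
    have := card_pos_iff_exists_mem.2 ⟨q, hq⟩
    omega

lemma fst_mem_base_of_snd_eq_one {p : ℤ × ℤ} (hp : p ∈ H) (h : p.2 = 1) : p.1 ∈ base := by
  obtain ⟨Y, hY, rfl⟩ := mem_H_iff.1 hp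
  have hsnd := hY.snd_sum
  obtain ⟨q, rfl⟩ : ∃ q, Y = {q} := by
    refine card_eq_one.1 (le_antisymm (by omega) (card_pos.2 ?_))
    rintro rfl
    simp at h
  rw [sum_singleton] at h ⊢
  exact fst_mem_base (ofGens_singleton.1 hY) h

lemma eq_one_of_mul_eq_one {a b : G} (h : a * b = 1) : a = 1 := by
  have hval := congrArg val h
  rw [val_mul, val_one] at hval
  apply val_injective
  rcases eq_zero_or_one_le_snd (val_mem a) with ha | ha
  · exact ha
  rcases eq_zero_or_one_le_snd (val_mem b) with hb | hb
  · simpa [hb] using hval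
  · have := congrArg Prod.snd hval
    rw [Prod.snd_add, Prod.snd_zero] at this
    omega

instance : Subsingleton Gˣ :=
  ⟨fun u v => Units.ext ((eq_one_of_mul_eq_one u.mul_inv).trans
    (eq_one_of_mul_eq_one v.mul_inv).symm)⟩

lemma val_mem_gens_of_irreducible {a : G} (ha : Irreducible a) : val a ∈ gens := by
  obtain ⟨Y, hY, hsum⟩ := mem_H_iff.1 (val_mem a)
  rcases Y.empty_or_exists_mem with rfl | ⟨q, hq⟩
  · exact absurd (val_injective (by simpa using hsum.symm)) ha.ne_one
  obtain ⟨Y', rfl⟩ := exists_cons_of_mem hq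
  rw [ofGens_cons] at hY
  have hqH : q ∈ H := mem_H_iff.2 ⟨{q}, by simpa using hY.1, sum_singleton q⟩
  have hY'H : Y'.sum ∈ H := mem_H_iff.2 ⟨Y', hY.2, rfl⟩
  have hsplit : a = ofVal q hqH * ofVal Y'.sum hY'H := val_injective (by simpa using hsum.symm)
  rcases ha.isUnit_or_isUnit hsplit with h | h <;>
    have h0 := congrArg val (isUnit_iff_eq_one.1 h) <;> rw [val_ofVal, val_one] at h0
  · have := snd_eq_one_or_two hY.1
    simp [h0] at this
  · have hc := hY.2.card_le_snd_sum
    rw [h0, Prod.snd_zero] at hc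
    rw [← hsum, card_eq_zero.1 (by omega : card Y' = 0), sum_cons, sum_zero, add_zero]
    exact hY.1

lemma irreducible_of_val_mem_gens {a : G} (ha : val a ∈ gens) : Irreducible a := by
  refine ⟨fun hu => ?_, fun x y hxy => ?_⟩
  · have := snd_eq_one_or_two ha
    simp [isUnit_iff_eq_one.1 hu] at this
  have hval : val x + val y = val a := by rw [hxy, val_mul]
  rcases eq_zero_or_one_le_snd (val_mem x) with hx | hx
  · exact Or.inl (isUnit_iff_eq_one.2 (val_injective hx))
  rcases eq_zero_or_one_le_snd (val_mem y) with hy | hy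
  · exact Or.inr (isUnit_iff_eq_one.2 (val_injective hy))
  exfalso
  have hsnd := congrArg Prod.snd hval
  rw [Prod.snd_add] at hsnd
  rcases ha with ⟨h1, -⟩ | ⟨h2, hnot⟩
  · omega
  exact hnot (Set.mem_add.2 ⟨_, fst_mem_base_of_snd_eq_one (val_mem x) (by omega), _,
    fst_mem_base_of_snd_eq_one (val_mem y) (by omega), by rw [← hval]; rfl⟩)

abbrev Atom : Type := {u : G // Irreducible u}

def atomVal (u : Atom) : ℤ × ℤ := val u.1

lemma atomVal_mem_gens (u : Atom) : atomVal u ∈ gens := val_mem_gens_of_irreducible u.2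

lemma atomVal_injective : Function.Injective atomVal :=
  fun _ _ h => Subtype.ext (val_injective h)

lemma exists_atomVal_eq {p : ℤ × ℤ} (hp : p ∈ gens) : ∃ u, atomVal u = p :=
  ⟨⟨ofVal p (AddSubmonoid.subset_closure hp), irreducible_of_val_mem_gens hp⟩, rfl⟩

instance : Nonempty Atom := (exists_atomVal_eq (mk_one_mem_gens.2 three_mem_base)).nonempty

noncomputable def toAtom : ℤ × ℤ → Atom := Function.invFun atomVal

def vals (z : Fac G) : Multiset (ℤ × ℤ) := z.map atomVal

noncomputable def ofVals (Y : Multiset (ℤ × ℤ)) : Fac G := Y.map toAtom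

lemma ofGens_vals (z : Fac G) : OfGens (vals z) := by
  intro p hp
  obtain ⟨u, -, rfl⟩ := mem_map.1 hp
  exact atomVal_mem_gens u

lemma vals_ofVals {Y : Multiset (ℤ × ℤ)} (hY : OfGens Y) : vals (ofVals Y) = Y := by
  rw [vals, ofVals, map_map]
  conv_rhs => rw [← map_id Y]
  exact map_congr rfl fun p hp => Function.invFun_eq (exists_atomVal_eq (hY p hp))

lemma ofVals_vals (z : Fac G) : ofVals (vals z) = z := by
  rw [vals, ofVals, map_map, toAtom, (Function.leftInverse_invFun atomVal_injective).comp_eq_id,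
    map_id]

@[simp] lemma card_vals (z : Fac G) : card (vals z) = card z := card_map _ _

lemma mem_vals {z : Fac G} {u : Atom} : atomVal u ∈ vals z ↔ u ∈ z :=
  mem_map_of_injective atomVal_injective

lemma mem_Z_iff {a : G} {z : Fac G} : z ∈ Z a ↔ (vals z).sum = val a := by
  rw [Z, Set.mem_ofPred_eq, piF, ← val_injective.eq_iff, val_prod, map_map]
  rfl

lemma snd_val_eq {a : G} {z : Fac G} (hz : z ∈ Z a) :
    (val a).2 = card z + card ((vals z).filter (·.2 = 2)) := by
  rw [← mem_Z_iff.1 hz, (ofGens_vals z).snd_sum, card_vals]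

lemma card_le_snd_val {a : G} {z : Fac G} (hz : z ∈ Z a) : (card z : ℤ) ≤ (val a).2 := by
  rw [snd_val_eq hz]
  omega

lemma atomic : Atomic G := fun a => by
  obtain ⟨Y, hY, hsum⟩ := mem_H_iff.1 (val_mem a)
  exact ⟨ofVals Y, mem_Z_iff.2 (by rw [vals_ofVals hY, hsum])⟩

lemma exists_mem_Z_vals_eq_add {a : G} {z : Fac G} (hz : z ∈ Z a)
    {R T A : Multiset (ℤ × ℤ)} (hzRT : vals z = R + T) (hA : OfGens A) (hsum : A.sum = R.sum) :
    ∃ z' ∈ Z a, vals z' = A + T ∧ d z z' ≤ max (card R) (card A) := by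
  have hRT : OfGens R ∧ OfGens T := ofGens_add.1 (hzRT ▸ ofGens_vals z)
  refine ⟨ofVals (A + T), ?_, vals_ofVals (ofGens_add.2 ⟨hA, hRT.2⟩), ?_⟩
  · rw [mem_Z_iff, vals_ofVals (ofGens_add.2 ⟨hA, hRT.2⟩), sum_add, hsum, ← sum_add, ← hzRT,
      mem_Z_iff.1 hz]
  · rw [← ofVals_vals z, hzRT, ofVals, ofVals, map_add, map_add, d_add_right]
    simpa using d_le_max_card (R.map toAtom) (A.map toAtom)

/-- Rewrite a part `R` of `z` of degree `deg u + 2` or `deg u + 3` as `u` plus at most three atoms;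
if `a` has smaller degree, every factorization of `a` has at most three atoms. -/
lemma exists_mem_Z_mem_d_le_four {a : G} {u : Atom} {z w : Fac G} (hz : z ∈ Z a) (hw : w ∈ Z a)
    (hu : u ∈ w) : ∃ z' ∈ Z a, u ∈ z' ∧ d z z' ≤ 4 := by
  have hq := atomVal_mem_gens u
  have hq12 := snd_eq_one_or_two hq
  by_cases hsmall : (val a).2 ≤ (atomVal u).2 + 1
  · refine ⟨w, hw, hu, (d_le_max_card z w).trans ?_⟩
    have := card_le_snd_val hz
    have := card_le_snd_val hw
    omega
  obtain ⟨R, hRz, hR1, hR2, hRc⟩ := (ofGens_vals z).exists_le_snd_sum_mem_Icc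
    (n := (atomVal u).2 + 2) (by omega) (by rw [mem_Z_iff.1 hz]; omega)
  obtain ⟨T, hRT⟩ := Multiset.le_iff_exists_add.1 hRz
  obtain ⟨B, hB, hBsum⟩ := exists_ofGens_sum_eq (R.sum.1 - (atomVal u).1)
    (R.sum.2 - (atomVal u).2 - 2).toNat
  have hBsum' : B.sum = R.sum - atomVal u := by
    rw [hBsum, Int.toNat_of_nonneg (by omega), sub_add_cancel]
    rfl
  obtain ⟨z', hz', hvals, hd⟩ := exists_mem_Z_vals_eq_add hz hRT (A := atomVal u ::ₘ B)
    (ofGens_cons.2 ⟨hq, hB⟩) (by rw [sum_cons, hBsum']; abel)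
  refine ⟨z', hz', mem_vals.1 (by simp [hvals]), hd.trans ?_⟩
  have := hB.card_le_snd_sum
  rw [hBsum', Prod.snd_sub] at this
  rw [card_cons]
  omega

lemma tH_le_four : tH G ≤ 4 := by
  refine iSup₂_le fun a u => sInf_le fun z hz ⟨w, hw, huw⟩ => ?_
  obtain ⟨z', hz', hu, hd⟩ := exists_mem_Z_mem_d_le_four hz hw (singleton_le.1 huw)
  exact ⟨z', hz', singleton_le.2 hu, by exact_mod_cast hd⟩

/-- With `deg a = #ones + 2 #twos` and `|z| = #ones + #twos`, a shorter factorization has more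
degree-two atoms, and two degree-one atoms fewer for each of them. -/
lemma two_le_card_filter_of_card_lt {a : G} {z z' : Fac G} (hz : z ∈ Z a) (hz' : z' ∈ Z a)
    (hlt : card z' < card z) : 2 ≤ card ((vals z).filter (·.2 = 1)) := by
  have h := congrArg card (ofGens_vals z).filter_add_filter
  have h' := congrArg card (ofGens_vals z').filter_add_filter
  have := snd_val_eq hz
  have := snd_val_eq hz'
  rw [card_add, card_vals] at h h'
  omega

lemma exists_mem_Z_card_add_one_eq {a : G} {z : Fac G} (hz : z ∈ Z a)
    (h2 : 2 ≤ card ((vals z).filter (·.2 = 1))) (h5 : 5 ≤ card z) :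
    ∃ z' ∈ Z a, card z' + 1 = card z ∧ d z z' ≤ 4 := by
  suffices ∃ R ≤ vals z, ∃ A, OfGens A ∧ A.sum = R.sum ∧ card A + 1 = card R ∧ card R ≤ 4 by
    obtain ⟨R, hR, A, hA, hsum, hcard, hR4⟩ := this
    obtain ⟨T, hRT⟩ := Multiset.le_iff_exists_add.1 hR
    obtain ⟨z', hz', hvals, hd⟩ := exists_mem_Z_vals_eq_add hz hRT hA hsum
    refine ⟨z', hz', ?_, hd.trans (by omega)⟩
    rw [← card_vals z', hvals, ← card_vals z, hRT, card_add, card_add]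
    omega
  by_cases htwos : (vals z).filter (·.2 = 2) = 0
  · have hones : ∀ p ∈ vals z, p.2 = 1 := fun p hp => by
      refine (snd_eq_one_or_two (ofGens_vals z p hp)).resolve_right fun h => ?_
      exact notMem_zero p (htwos ▸ mem_filter.2 ⟨hp, h⟩)
    obtain ⟨R, hR, hR4, hσ⟩ := exists_card_eq_four_sum_map_ne_zero (f := Prod.fst)
      (by simpa using h5)
      fun p hp => ne_zero_of_mem_base (fst_mem_base (ofGens_vals z p hp) (hones p hp))
    obtain ⟨N, hN⟩ := exists_lt_scale (2 * |(R.map Prod.fst).sum|)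
    refine ⟨R, hR, {(scale (N + 1) - scale N + (R.map Prod.fst).sum, 2), (scale N, 1),
      (-scale (N + 1), 1)}, ?_, ?_, by simp [hR4], by omega⟩
    · simp [scale_succ_sub_scale_add_notMem hσ hN, scale_mem_base, neg_scale_mem_base]
    · have hRsnd : R.sum.2 = 4 := by
        rw [snd_sum, map_congr rfl fun p hp => hones p (mem_of_le hR hp), map_const',
          sum_replicate, hR4]
        rfl
      simp only [insert_eq_cons, sum_cons, sum_singleton, Prod.mk_add_mk]
      ext
      · rw [fst_sum]
        ring
      · rw [hRsnd]
        norm_num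
  · -- two degree-one atoms and a degree-two atom become two degree-two atoms
    obtain ⟨C, hC, hC2⟩ := exists_le_card_eq h2
    obtain ⟨x, y, rfl⟩ := card_eq_two.1 hC2
    obtain ⟨e, he⟩ := exists_mem_of_ne_zero htwos
    have hx := (mem_filter.1 (mem_of_le hC (by simp : x ∈ ({x, y} : Multiset _)))).2
    have hy := (mem_filter.1 (mem_of_le hC (by simp : y ∈ ({x, y} : Multiset _)))).2
    have he2 := (mem_filter.1 he).2
    set σ := x.1 + y.1 + e.1 with hσ
    set i : ℤ := if 3 ∣ σ - 1 then 2 else 1 with hi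
    refine ⟨{x, y} + {e}, (add_le_add hC (singleton_le.2 he)).trans_eq
      (ofGens_vals z).filter_add_filter, {(i, 2), (σ - i, 2)}, ?_, ?_, by simp, by simp⟩
    · simp only [insert_eq_cons, ofGens_cons, ofGens_singleton, mk_two_mem_gens]
      constructor <;> apply notMem_add_of_not_three_dvd <;> rw [hi] <;> split_ifs <;> omega
    · simp only [insert_eq_cons, cons_add, singleton_add, sum_cons, sum_singleton, Prod.mk_add_mk]
      ext <;> simp only [Prod.fst_add, Prod.snd_add] <;> omega

lemma cadj_le_four (a : G) : cadj a ≤ 4 := by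
  refine sSup_le ?_
  rintro _ ⟨_, _, ⟨⟨zk, hzk, rfl⟩, ⟨zl, hzl, rfl⟩, hlt, hadj⟩, rfl⟩
  suffices ∃ x ∈ Zk a (card zk), ∃ y ∈ Zk a (card zl), d x y ≤ 4 by
    obtain ⟨x, hx, y, hy, hd⟩ := this
    exact_mod_cast (dS_le_d hx hy).trans hd
  by_cases hl : card zl ≤ 4
  · exact ⟨zk, ⟨hzk, rfl⟩, zl, ⟨hzl, rfl⟩, (d_le_max_card _ _).trans (by omega)⟩
  obtain ⟨z', hz', hcard, hd⟩ :=
    exists_mem_Z_card_add_one_eq hzl (two_le_card_filter_of_card_lt hzl hzk hlt) (by omega)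
  have hz'k : card z' = card zk := by
    rcases hadj _ ⟨z', hz', rfl⟩ (by omega) (by omega) with h | h <;> omega
  exact ⟨z', ⟨hz', hz'k⟩, zl, ⟨hzl, rfl⟩, d_comm zl z' ▸ hd⟩

lemma cadjH_le_four : cadjH G ≤ 4 := iSup_le cadj_le_four

def smallSum (k : ℕ) (z : Fac G) : ℤ := ((vals z).map fun p => small k p.1).sum

lemma smallSum_eq (k : ℕ) (z : Fac G) :
    smallSum k z = (z.map fun u => small k (atomVal u).1).sum := by
  rw [smallSum, vals, map_map]
  rfl

lemma fst_mem_base_of_card_eq {a : G} {w : Fac G} (hw : w ∈ Z a)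
    (hcard : (card w : ℤ) = (val a).2) : ∀ u ∈ w, (atomVal u).1 ∈ base := by
  intro u hu
  refine fst_mem_base (atomVal_mem_gens u)
    ((snd_eq_one_or_two (atomVal_mem_gens u)).resolve_right fun h2 => ?_)
  have hmem : atomVal u ∈ (vals w).filter (·.2 = 2) := mem_filter.2 ⟨mem_vals.2 hu, h2⟩
  have := card_pos_iff_exists_mem.2 ⟨_, hmem⟩
  have := snd_val_eq hw
  omega

/-- Modulo `scale (k + 1)`, `smallSum k w` is the first coordinate of `a`, while exchanging atoms
changes it by at most `scale k` per atom. -/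
lemma scale_succ_le_two_mul_d_mul {a : G} {k : ℕ} {w w' : Fac G} (hw : w ∈ Z a) (hw' : w' ∈ Z a)
    (hB : ∀ u ∈ w, (atomVal u).1 ∈ base) (hB' : ∀ u ∈ w', (atomVal u).1 ∈ base)
    (hne : smallSum k w ≠ smallSum k w') : scale (k + 1) ≤ 2 * d w w' * scale k := by
  classical
  have hfst : ∀ {v}, v ∈ Z a → (v.map fun u => (atomVal u).1).sum = (val a).1 := fun hv => by
    rw [← mem_Z_iff.1 hv, fst_sum, vals, map_map]
    rfl
  have hcong : ∀ {v : Fac G}, (∀ u ∈ v, (atomVal u).1 ∈ base) →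
      scale (k + 1) ∣ (v.map fun u => (atomVal u).1).sum - smallSum k v := fun hv => by
    rw [smallSum_eq, ← sum_map_sub]
    refine dvd_sum fun x hx => ?_
    obtain ⟨u, hu, rfl⟩ := mem_map.1 hx
    exact scale_succ_dvd_sub_small (hv u hu)
  have hdvd : scale (k + 1) ∣ smallSum k w - smallSum k w' := by
    have := dvd_sub (hcong hB') (hcong hB)
    rwa [hfst hw, hfst hw', sub_sub_sub_cancel_left] at this
  have hsmall : ∀ {v v' : Fac G}, (∀ u ∈ v, (atomVal u).1 ∈ base) →
      |((v - v').map fun u => small k (atomVal u).1).sum| ≤ card (v - v') * scale k :=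
    fun hv => abs_sum_map_le_card_mul fun u hu => abs_small_le (hv u (mem_of_le tsub_le_self hu))
  have hd := d_eq w w'
  calc scale (k + 1) ≤ |smallSum k w - smallSum k w'| :=
        Int.le_of_dvd (abs_pos.2 (sub_ne_zero.2 hne)) ((dvd_abs _ _).2 hdvd)
    _ ≤ card (w - w') * scale k + card (w' - w) * scale k := by
        rw [smallSum_eq, smallSum_eq, sum_map_sub_sum_map]
        exact (abs_sub _ _).trans (add_le_add (hsmall hB) (hsmall hB'))
    _ ≤ 2 * d w w' * scale k := by
        have := scale_pos k
        have h1 : (card (w - w') : ℤ) ≤ d w w' := by exact_mod_cast hd ▸ le_max_left _ _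
        have h2 : (card (w' - w) : ℤ) ≤ d w w' := by exact_mod_cast hd ▸ le_max_right _ _
        nlinarith

lemma pow_le_ceq_of_smallSum_ne {a : G} {k : ℕ} {z₁ z₂ : Fac G} (h₁ : z₁ ∈ Z a) (h₂ : z₂ ∈ Z a)
    (hcard₁ : (card z₁ : ℤ) = (val a).2) (hcard : card z₁ = card z₂)
    (hne : smallSum k z₁ ≠ smallSum k z₂) : ((3 ^ (2 * k + 2) : ℕ) : ℕ∞) ≤ ceq a := by
  refine le_sInf fun N hN => ?_
  obtain ⟨x, hx, y, hy, ⟨hd, hxy⟩, ⟨hxc, hxs⟩, hy'⟩ :=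
    (hN _ h₁ _ h₂ hcard).exists_step_of_not
      (Q := fun w => card w = card z₁ ∧ smallSum k w = smallSum k z₁) ⟨rfl, rfl⟩
      fun h => hne h.2.symm
  have key := scale_succ_le_two_mul_d_mul hx hy
    (fst_mem_base_of_card_eq hx (hxc ▸ hcard₁))
    (fst_mem_base_of_card_eq hy (by rw [← hxy, hxc, hcard₁]))
    (by rw [hxs]; exact fun h => hy' ⟨hxy ▸ hxc, h.symm⟩)
  rw [scale_succ, pow_succ] at key
  have hle : 3 ^ (2 * k + 2) * 3 ≤ 2 * d x y := by
    exact_mod_cast le_of_mul_le_mul_right key (scale_pos k)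
  exact le_trans (by exact_mod_cast (by omega : 3 ^ (2 * k + 2) ≤ d x y)) hd

lemma sum_replicate_mk (n : ℕ) (x y : ℤ) : (replicate n (x, y)).sum = (n * x, n * y) := by
  rw [sum_replicate, Prod.smul_mk, nsmul_eq_mul, nsmul_eq_mul]

/-- Writing `3 ^ (2n + 3) = 2m + 1`, the element `(scale (n + 1), 2m + 1)` is both
`(2m + 1) • (scale n, 1)` and `(scale (n + 1), 1) + m • (scale n, 1) + m • (-scale n, 1)`. -/
lemma exists_lt_ceq (n : ℕ) : ∃ a : G, (n : ℕ∞) < ceq a := by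
  obtain ⟨m, hm⟩ : Odd (3 ^ (2 * n + 3)) := Odd.pow (by decide)
  have hscale : scale (n + 1) = (2 * m + 1 : ℕ) * scale n := by rw [scale_succ, ← hm]; push_cast; ring
  set Y₁ := replicate (2 * m + 1) (scale n, (1 : ℤ))
  set Y₂ := (scale (n + 1), (1 : ℤ)) ::ₘ (replicate m (scale n, 1) + replicate m (-scale n, 1))
  have hY₁ : OfGens Y₁ := ofGens_replicate (by simpa using scale_mem_base n)
  have hY₂ : OfGens Y₂ := by simp [Y₂, scale_mem_base, neg_scale_mem_base]
  have hsum₁ : Y₁.sum = (scale (n + 1), ((2 * m + 1 : ℕ) : ℤ)) := by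
    rw [sum_replicate_mk, hscale, mul_one]
  have hsum₂ : Y₂.sum = Y₁.sum := by
    rw [hsum₁, sum_cons, sum_add, sum_replicate_mk, sum_replicate_mk, Prod.mk_add_mk,
      Prod.mk_add_mk]
    congr 1 <;> push_cast <;> ring
  set a := ofVal Y₁.sum (mem_H_iff.2 ⟨Y₁, hY₁, rfl⟩)
  have hZ₁ : ofVals Y₁ ∈ Z a := mem_Z_iff.2 (by rw [vals_ofVals hY₁]; rfl)
  have hZ₂ : ofVals Y₂ ∈ Z a := mem_Z_iff.2 (by rw [vals_ofVals hY₂, hsum₂]; rfl)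
  have hlt : |scale n| < scale (n + 1) := by
    rw [abs_of_pos (scale_pos n)]
    exact scale_strictMono (by omega)
  have hsmall₁ : smallSum n (ofVals Y₁) = scale (n + 1) := by
    rw [smallSum, vals_ofVals hY₁, map_replicate, sum_replicate, small, if_pos hlt, hscale,
      nsmul_eq_mul]
  have hsmall₂ : smallSum n (ofVals Y₂) = 0 := by
    rw [smallSum, vals_ofVals hY₂, map_cons, Multiset.map_add, map_replicate, map_replicate, sum_cons,
      sum_add, sum_replicate, sum_replicate]
    simp [small, hlt, abs_of_pos (scale_pos (n + 1))]
  refine ⟨a, lt_of_lt_of_le ?_ (pow_le_ceq_of_smallSum_ne (k := n) hZ₁ hZ₂ ?_ ?_ ?_)⟩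
  · exact_mod_cast (Nat.lt_pow_self (by norm_num)).trans' (by omega : n < 2 * n + 2)
  · rw [← card_vals, vals_ofVals hY₁, val_ofVal, hsum₁, card_replicate]
  · rw [← card_vals, ← card_vals, vals_ofVals hY₁, vals_ofVals hY₂, card_replicate, card_cons,
      card_add, card_replicate, card_replicate]
    ring
  · rw [hsmall₁, hsmall₂]
    exact (scale_pos (n + 1)).ne'

lemma ceqH_eq_top : ceqH G = ⊤ := by
  refine iSup_eq_top.2 fun b hb => ?_
  lift b to ℕ using hb.ne
  exact exists_lt_ceq b

end Counterexample

/-- There exists a reduced, commutative, cancellative, atomic monoid `H` that is tame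
(`t(H) < ∞`) but satisfies `c_eq(H) = ∞` (hence `c_mon(H) = ∞`), while
`c_adj(H) < ∞` (indeed `c_adj(H) ≤ 6`). -/
theorem stmt14 :
    ∃ (α : Type) (inst : CancelCommMonoid α),
      @Reduced α inst ∧ @Atomic α inst ∧
      @tH α inst < ⊤ ∧ @ceqH α inst = ⊤ ∧ @cmonH α inst = ⊤ ∧
      @cadjH α inst < ⊤ ∧ @cadjH α inst ≤ (6 : ℕ∞) := by
  refine ⟨Counterexample.G, inferInstance, fun _ => isUnit_iff_eq_one.1, Counterexample.atomic,
    ?_, Counterexample.ceqH_eq_top, eq_top_mono ceqH_le_cmonH Counterexample.ceqH_eq_top, ?_, ?_⟩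
  · exact Counterexample.tH_le_four.trans_lt (by decide)
  · exact Counterexample.cadjH_le_four.trans_lt (by decide)
  · exact Counterexample.cadjH_le_four.trans (by decide)

end CMR
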